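/- Let C₁ be the pseudo null canal hypersurface in E₁⁴ and set N(s,t,w) = −r′(s)F₁(s) + √(1−r′(s)²)·( g(t,w)sin(f(t,w))F₂(s) + cos(f(t,w))F₃(s) + (sin(f(t,w))/(2g(t,w)))F₄(s) ). Then for all (s,t,w): ⟨N, N⟩ = 1 and ⟨N, ∂C₁/∂s⟩ = ⟨N, ∂C₁/∂t⟩ = ⟨N, ∂C₁/∂w⟩ = 0; in particular N is a spacelike unit normal vector field of C₁ and the hypersurface C₁ is timelike. -/

import Mathlib

noncomputable def mink (u v : Fin 4 → ℝ) : ℝ :=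
  -(u 0 * v 0) + u 1 * v 1 + u 2 * v 2 + u 3 * v 3

lemma mink_add_left (u v w : Fin 4 → ℝ) : mink (u + v) w = mink u w + mink v w := by
  simp [mink]; ring
lemma mink_add_right (u v w : Fin 4 → ℝ) : mink u (v + w) = mink u v + mink u w := by
  simp [mink]; ring
lemma mink_sub_left (u v w : Fin 4 → ℝ) : mink (u - v) w = mink u w - mink v w := by
  simp [mink]; ring
lemma mink_sub_right (u v w : Fin 4 → ℝ) : mink u (v - w) = mink u v - mink u w := by
  simp [mink]; ring
lemma mink_smul_left (c : ℝ) (u w : Fin 4 → ℝ) : mink (c • u) w = c * mink u w := by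
  simp [mink]; ring
lemma mink_smul_right (c : ℝ) (u w : Fin 4 → ℝ) : mink u (c • w) = c * mink u w := by
  simp [mink]; ring
lemma mink_neg_left (u w : Fin 4 → ℝ) : mink (-u) w = -mink u w := by
  simp [mink]; ring
lemma mink_neg_right (u w : Fin 4 → ℝ) : mink u (-w) = -mink u w := by
  simp [mink]; ring
lemma mink_zero_right (u : Fin 4 → ℝ) : mink u 0 = 0 := by simp [mink]
lemma mink_zero_left (u : Fin 4 → ℝ) : mink 0 u = 0 := by simp [mink]
lemma mink_comm (u v : Fin 4 → ℝ) : mink u v = mink v u := by simp [mink]; ring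

set_option maxHeartbeats 2000000 in
/-- The field `N = -r'F₁ + √(1-r'²)(g sin f · F₂ + cos f · F₃ + (sin f/(2g)) F₄)` is a
spacelike unit normal vector field of the pseudo null canal hypersurface `C₁`,
so `C₁` is timelike. -/
theorem pseudoNull_canal_unit_normal
    (γ F₁ F₂ F₃ F₄ : ℝ → Fin 4 → ℝ) (k₁ k₂ k₃ : ℝ → ℝ)
    (hγ : ContDiff ℝ (⊤ : ℕ∞) γ) (hF₁ : ContDiff ℝ (⊤ : ℕ∞) F₁) (hF₂ : ContDiff ℝ (⊤ : ℕ∞) F₂)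
    (hF₃ : ContDiff ℝ (⊤ : ℕ∞) F₃) (hF₄ : ContDiff ℝ (⊤ : ℕ∞) F₄)
    (hk₁ : ContDiff ℝ (⊤ : ℕ∞) k₁) (hk₂ : ContDiff ℝ (⊤ : ℕ∞) k₂) (hk₃ : ContDiff ℝ (⊤ : ℕ∞) k₃)
    (hγ' : ∀ s, deriv γ s = F₁ s)
    (hF₁' : ∀ s, deriv F₁ s = k₁ s • F₂ s)
    (hF₂' : ∀ s, deriv F₂ s = k₂ s • F₃ s)
    (hF₃' : ∀ s, deriv F₃ s = k₃ s • F₂ s - k₂ s • F₄ s)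
    (hF₄' : ∀ s, deriv F₄ s = -(k₁ s • F₁ s) - k₃ s • F₃ s)
    (h11 : ∀ s, mink (F₁ s) (F₁ s) = 1)
    (h33 : ∀ s, mink (F₃ s) (F₃ s) = 1)
    (h22 : ∀ s, mink (F₂ s) (F₂ s) = 0)
    (h44 : ∀ s, mink (F₄ s) (F₄ s) = 0)
    (h24 : ∀ s, mink (F₂ s) (F₄ s) = 1)
    (h12 : ∀ s, mink (F₁ s) (F₂ s) = 0)
    (h13 : ∀ s, mink (F₁ s) (F₃ s) = 0)
    (h14 : ∀ s, mink (F₁ s) (F₄ s) = 0)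
    (h23 : ∀ s, mink (F₂ s) (F₃ s) = 0)
    (h34 : ∀ s, mink (F₃ s) (F₄ s) = 0)
    (r : ℝ → ℝ) (hr : ContDiff ℝ (⊤ : ℕ∞) r)
    (hrpos : ∀ s, 0 < r s) (hr' : ∀ s, (deriv r s) ^ 2 < 1)
    (f g : ℝ → ℝ → ℝ)
    (hf : ContDiff ℝ (⊤ : ℕ∞) (Function.uncurry f)) (hg : ContDiff ℝ (⊤ : ℕ∞) (Function.uncurry g))
    (hgne : ∀ t w, g t w ≠ 0)
    (C₁ : ℝ → ℝ → ℝ → Fin 4 → ℝ)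
    (hC₁ : ∀ s t w, C₁ s t w =
      γ s - (r s * deriv r s) • F₁ s +
        (r s * Real.sqrt (1 - (deriv r s) ^ 2)) •
          ((g t w * Real.sin (f t w)) • F₂ s + Real.cos (f t w) • F₃ s +
            (Real.sin (f t w) / (2 * g t w)) • F₄ s))
    (N : ℝ → ℝ → ℝ → Fin 4 → ℝ)
    (hN : ∀ s t w, N s t w =
      -(deriv r s) • F₁ s +
        Real.sqrt (1 - (deriv r s) ^ 2) •
          ((g t w * Real.sin (f t w)) • F₂ s + Real.cos (f t w) • F₃ s +
            (Real.sin (f t w) / (2 * g t w)) • F₄ s)) :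
    ∀ s t w, mink (N s t w) (N s t w) = 1 ∧
      mink (N s t w) (deriv (fun x => C₁ x t w) s) = 0 ∧
      mink (N s t w) (deriv (fun x => C₁ s x w) t) = 0 ∧
      mink (N s t w) (deriv (fun x => C₁ s t x) w) = 0 := by
  -- symmetric versions of the inner-product table
  have h42 : ∀ s, mink (F₄ s) (F₂ s) = 1 := fun s => (mink_comm _ _).trans (h24 s)
  have h21 : ∀ s, mink (F₂ s) (F₁ s) = 0 := fun s => (mink_comm _ _).trans (h12 s)
  have h31 : ∀ s, mink (F₃ s) (F₁ s) = 0 := fun s => (mink_comm _ _).trans (h13 s)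
  have h41 : ∀ s, mink (F₄ s) (F₁ s) = 0 := fun s => (mink_comm _ _).trans (h14 s)
  have h32 : ∀ s, mink (F₃ s) (F₂ s) = 0 := fun s => (mink_comm _ _).trans (h23 s)
  have h43 : ∀ s, mink (F₄ s) (F₃ s) = 0 := fun s => (mink_comm _ _).trans (h34 s)
  -- derivative facts for the frame
  have hdγ : ∀ x, HasDerivAt γ (F₁ x) x := fun x => by
    have h := (hγ.differentiable (by simp) x).hasDerivAt; rwa [hγ' x] at h
  have hdF₁ : ∀ x, HasDerivAt F₁ (k₁ x • F₂ x) x := fun x => by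
    have h := (hF₁.differentiable (by simp) x).hasDerivAt; rwa [hF₁' x] at h
  have hdF₂ : ∀ x, HasDerivAt F₂ (k₂ x • F₃ x) x := fun x => by
    have h := (hF₂.differentiable (by simp) x).hasDerivAt; rwa [hF₂' x] at h
  have hdF₃ : ∀ x, HasDerivAt F₃ (k₃ x • F₂ x - k₂ x • F₄ x) x := fun x => by
    have h := (hF₃.differentiable (by simp) x).hasDerivAt; rwa [hF₃' x] at h
  have hdF₄ : ∀ x, HasDerivAt F₄ (-(k₁ x • F₁ x) - k₃ x • F₃ x) x := fun x => by
    have h := (hF₄.differentiable (by simp) x).hasDerivAt; rwa [hF₄' x] at h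
  have hdr : Differentiable ℝ (deriv r) :=
    ((contDiff_infty_iff_deriv.mp (hr.of_le (by simp))).2).differentiable (by norm_num)
  have hrd : ∀ x, HasDerivAt r (deriv r x) x := fun x => (hr.differentiable (by simp) x).hasDerivAt
  have hrd' : ∀ x, HasDerivAt (deriv r) (deriv (deriv r) x) x := fun x => (hdr x).hasDerivAt
  intro s t w
  have h1r : 0 < 1 - deriv r s ^ 2 := by nlinarith [hr' s]
  have hq2 : Real.sqrt (1 - deriv r s ^ 2) ^ 2 = 1 - deriv r s ^ 2 := Real.sq_sqrt h1r.le
  have hqpos : 0 < Real.sqrt (1 - deriv r s ^ 2) := Real.sqrt_pos.mpr h1r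
  have hsc : Real.sin (f t w) ^ 2 + Real.cos (f t w) ^ 2 = 1 := Real.sin_sq_add_cos_sq _
  refine ⟨?_, ?_, ?_, ?_⟩
  · rw [hN]
    simp only [mink_add_left, mink_add_right, mink_sub_left, mink_sub_right, mink_smul_left,
      mink_smul_right, mink_neg_left, mink_neg_right, mink_zero_left, mink_zero_right, h11, h22, h33, h44, h24, h42, h12, h21,
      h13, h31, h14, h41, h23, h32, h34, h43]
    field_simp [hgne t w]
    linear_combination (4*g t w^2*(Real.sin (f t w)^2+Real.cos (f t w)^2)) * hq2 + (4*g t w^2*(1 - deriv r s^2)) * hsc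
  · -- s-derivative
    have hin : HasDerivAt (fun x => 1 - deriv r x ^ 2)
        (-(2 * deriv r s * deriv (deriv r) s)) s := by
      have := ((hrd' s).pow 2).const_sub 1
      simpa [pow_one] using this
    have hq' : HasDerivAt (fun x => Real.sqrt (1 - deriv r x ^ 2))
        (1 / (2 * Real.sqrt (1 - deriv r s ^ 2)) * -(2 * deriv r s * deriv (deriv r) s)) s :=
      (Real.hasDerivAt_sqrt h1r.ne').comp s hin
    have hPd : HasDerivAt (fun x => r x * deriv r x)
        (deriv r s * deriv r s + r s * deriv (deriv r) s) s := (hrd s).mul (hrd' s)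
    have hMd : HasDerivAt (fun x => r x * Real.sqrt (1 - deriv r x ^ 2))
        (deriv r s * Real.sqrt (1 - deriv r s ^ 2) +
          r s * (1 / (2 * Real.sqrt (1 - deriv r s ^ 2)) *
            -(2 * deriv r s * deriv (deriv r) s))) s := (hrd s).mul hq'
    have hEd : HasDerivAt (fun x => (g t w * Real.sin (f t w)) • F₂ x +
        Real.cos (f t w) • F₃ x + (Real.sin (f t w) / (2 * g t w)) • F₄ x)
        ((g t w * Real.sin (f t w)) • (k₂ s • F₃ s) +
          Real.cos (f t w) • (k₃ s • F₂ s - k₂ s • F₄ s) +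
          (Real.sin (f t w) / (2 * g t w)) • (-(k₁ s • F₁ s) - k₃ s • F₃ s)) s :=
      (((hdF₂ s).const_smul (g t w * Real.sin (f t w))).add ((hdF₃ s).const_smul (Real.cos (f t w)))).add ((hdF₄ s).const_smul (Real.sin (f t w) / (2 * g t w)))
    have hfun : (fun x => C₁ x t w) = fun x =>
        γ x - (r x * deriv r x) • F₁ x +
          (r x * Real.sqrt (1 - deriv r x ^ 2)) •
            ((g t w * Real.sin (f t w)) • F₂ x + Real.cos (f t w) • F₃ x +
              (Real.sin (f t w) / (2 * g t w)) • F₄ x) := funext fun x => hC₁ x t w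
    have hD : HasDerivAt (fun x => C₁ x t w)
        ((F₁ s - ((r s * deriv r s) • (k₁ s • F₂ s) +
            (deriv r s * deriv r s + r s * deriv (deriv r) s) • F₁ s)) +
          ((r s * Real.sqrt (1 - deriv r s ^ 2)) •
              ((g t w * Real.sin (f t w)) • (k₂ s • F₃ s) +
                Real.cos (f t w) • (k₃ s • F₂ s - k₂ s • F₄ s) +
                (Real.sin (f t w) / (2 * g t w)) • (-(k₁ s • F₁ s) - k₃ s • F₃ s)) +
            (deriv r s * Real.sqrt (1 - deriv r s ^ 2) +
              r s * (1 / (2 * Real.sqrt (1 - deriv r s ^ 2)) *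
                -(2 * deriv r s * deriv (deriv r) s))) •
              ((g t w * Real.sin (f t w)) • F₂ s + Real.cos (f t w) • F₃ s +
                (Real.sin (f t w) / (2 * g t w)) • F₄ s))) s := by
      rw [hfun]
      exact ((hdγ s).sub (hPd.smul (hdF₁ s))).add (hMd.smul hEd)
    rw [hD.deriv, hN]
    simp only [mink_add_left, mink_add_right, mink_sub_left, mink_sub_right, mink_smul_left,
      mink_smul_right, mink_neg_left, mink_neg_right, mink_zero_left, mink_zero_right, h11, h22, h33, h44, h24, h42, h12, h21,
      h13, h31, h14, h41, h23, h32, h34, h43]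
    field_simp [hgne t w]
    linear_combination (4*g t w^2*Real.sqrt (1 - deriv r s ^ 2)*deriv r s*(Real.sin (f t w)^2+Real.cos (f t w)^2)) * hq2 + (4*g t w^2*Real.sqrt (1 - deriv r s ^ 2)*deriv r s*((1 - deriv r s^2) - r s*deriv (deriv r) s)) * hsc
  · -- t-derivative
    have hgt : ContDiff ℝ (⊤ : ℕ∞) (fun x => g x w) := hg.comp (contDiff_id.prodMk contDiff_const)
    have hft : ContDiff ℝ (⊤ : ℕ∞) (fun x => f x w) := hf.comp (contDiff_id.prodMk contDiff_const)
    have hgd : HasDerivAt (fun x => g x w) (deriv (fun x => g x w) t) t :=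
      (hgt.differentiable (by simp) t).hasDerivAt
    have hfd : HasDerivAt (fun x => f x w) (deriv (fun x => f x w) t) t :=
      (hft.differentiable (by simp) t).hasDerivAt
    have hA : HasDerivAt (fun x => g x w * Real.sin (f x w))
        (deriv (fun x => g x w) t * Real.sin (f t w) +
          g t w * (Real.cos (f t w) * deriv (fun x => f x w) t)) t := hgd.mul hfd.sin
    have hB : HasDerivAt (fun x => Real.cos (f x w))
        (-Real.sin (f t w) * deriv (fun x => f x w) t) t := hfd.cos
    have hC : HasDerivAt (fun x => Real.sin (f x w) / (2 * g x w))
        ((Real.cos (f t w) * deriv (fun x => f x w) t * (2 * g t w) -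
          Real.sin (f t w) * (2 * deriv (fun x => g x w) t)) / (2 * g t w) ^ 2) t :=
      hfd.sin.div (hgd.const_mul 2) (by simpa using hgne t w)
    have hfun : (fun x => C₁ s x w) = fun x =>
        γ s - (r s * deriv r s) • F₁ s +
          (r s * Real.sqrt (1 - deriv r s ^ 2)) •
            ((g x w * Real.sin (f x w)) • F₂ s + Real.cos (f x w) • F₃ s +
              (Real.sin (f x w) / (2 * g x w)) • F₄ s) := funext fun x => hC₁ s x w
    have hD : HasDerivAt (fun x => C₁ s x w)
        ((0 : Fin 4 → ℝ) + (r s * Real.sqrt (1 - deriv r s ^ 2)) •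
          ((deriv (fun x => g x w) t * Real.sin (f t w) +
              g t w * (Real.cos (f t w) * deriv (fun x => f x w) t)) • F₂ s +
            (-Real.sin (f t w) * deriv (fun x => f x w) t) • F₃ s +
            ((Real.cos (f t w) * deriv (fun x => f x w) t * (2 * g t w) -
              Real.sin (f t w) * (2 * deriv (fun x => g x w) t)) / (2 * g t w) ^ 2) • F₄ s)) t := by
      rw [hfun]
      exact (hasDerivAt_const t _).add
        (HasDerivAt.const_smul (r s * Real.sqrt (1 - deriv r s ^ 2)) (((hA.smul_const (F₂ s)).add (hB.smul_const (F₃ s))).add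
          (hC.smul_const (F₄ s))))
    rw [hD.deriv, hN]
    simp only [mink_add_left, mink_add_right, mink_sub_left, mink_sub_right, mink_smul_left,
      mink_smul_right, mink_neg_left, mink_neg_right, mink_zero_left, mink_zero_right, h11, h22, h33, h44, h24, h42, h12, h21,
      h13, h31, h14, h41, h23, h32, h34, h43]
    field_simp [hgne t w]
    ring
  · -- w-derivative
    have hgt : ContDiff ℝ (⊤ : ℕ∞) (fun x => g t x) := hg.comp (contDiff_const.prodMk contDiff_id)
    have hft : ContDiff ℝ (⊤ : ℕ∞) (fun x => f t x) := hf.comp (contDiff_const.prodMk contDiff_id)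
    have hgd : HasDerivAt (fun x => g t x) (deriv (fun x => g t x) w) w :=
      (hgt.differentiable (by simp) w).hasDerivAt
    have hfd : HasDerivAt (fun x => f t x) (deriv (fun x => f t x) w) w :=
      (hft.differentiable (by simp) w).hasDerivAt
    have hA : HasDerivAt (fun x => g t x * Real.sin (f t x))
        (deriv (fun x => g t x) w * Real.sin (f t w) +
          g t w * (Real.cos (f t w) * deriv (fun x => f t x) w)) w := hgd.mul hfd.sin
    have hB : HasDerivAt (fun x => Real.cos (f t x))
        (-Real.sin (f t w) * deriv (fun x => f t x) w) w := hfd.cos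
    have hC : HasDerivAt (fun x => Real.sin (f t x) / (2 * g t x))
        ((Real.cos (f t w) * deriv (fun x => f t x) w * (2 * g t w) -
          Real.sin (f t w) * (2 * deriv (fun x => g t x) w)) / (2 * g t w) ^ 2) w :=
      hfd.sin.div (hgd.const_mul 2) (by simpa using hgne t w)
    have hfun : (fun x => C₁ s t x) = fun x =>
        γ s - (r s * deriv r s) • F₁ s +
          (r s * Real.sqrt (1 - deriv r s ^ 2)) •
            ((g t x * Real.sin (f t x)) • F₂ s + Real.cos (f t x) • F₃ s +
              (Real.sin (f t x) / (2 * g t x)) • F₄ s) := funext fun x => hC₁ s t x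
    have hD : HasDerivAt (fun x => C₁ s t x)
        ((0 : Fin 4 → ℝ) + (r s * Real.sqrt (1 - deriv r s ^ 2)) •
          ((deriv (fun x => g t x) w * Real.sin (f t w) +
              g t w * (Real.cos (f t w) * deriv (fun x => f t x) w)) • F₂ s +
            (-Real.sin (f t w) * deriv (fun x => f t x) w) • F₃ s +
            ((Real.cos (f t w) * deriv (fun x => f t x) w * (2 * g t w) -
              Real.sin (f t w) * (2 * deriv (fun x => g t x) w)) / (2 * g t w) ^ 2) • F₄ s)) w := by
      rw [hfun]
      exact (hasDerivAt_const w _).add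
        (HasDerivAt.const_smul (r s * Real.sqrt (1 - deriv r s ^ 2)) (((hA.smul_const (F₂ s)).add (hB.smul_const (F₃ s))).add
          (hC.smul_const (F₄ s))))
    rw [hD.deriv, hN]
    simp only [mink_add_left, mink_add_right, mink_sub_left, mink_sub_right, mink_smul_left,
      mink_smul_right, mink_neg_left, mink_neg_right, mink_zero_left, mink_zero_right, h11, h22, h33, h44, h24, h42, h12, h21,
      h13, h31, h14, h41, h23, h32, h34, h43]
    field_simp [hgne t w]
    ring
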